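/- arXiv:1004.0856 — 5 statements merged into one kernel-verified Lean document; each statement's English description precedes it below -/
import Mathlib

section
/- Let U = aJ + bI be an (p+q)×(p+q) matrix (J all-ones, I identity) and partition U into blocks U₁ (p×p), U₂ (p×q), U₃ (q×p), U₄ (q×q). For k ∈ ℂ such that (aq+b)(1−k) − (1+k) ≠ 0 and (1−k)U₄ − (1+k)I is invertible, the effective matrix Ũ(k) = U₁ − (1−k) U₂ [(1−k)U₄ − (1+k)I]⁻¹ U₃ equals ( (a b (1−k) − a(1+k)) / ((aq+b)(1−k) − (1+k)) ) J_{p×p} + b I_{p×p}. -/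
open Matrix

/-- For the permutation-symmetric coupling `U = aJ + bI` at a vertex with `p` internal
and `q` external edges, the effective energy-dependent coupling matrix
`Ũ(k) = U₁ − (1−k) U₂ [(1−k)U₄ − (1+k)I]⁻¹ U₃` equals
`(a b (1−k) − a(1+k))/((aq+b)(1−k) − (1+k)) · J + b · I`. -/
theorem stmt2 (p q : ℕ) (hp : 1 ≤ p) (hq : 1 ≤ q) (a b k : ℂ)
    (U₁ : Matrix (Fin p) (Fin p) ℂ) (U₂ : Matrix (Fin p) (Fin q) ℂ)
    (U₃ : Matrix (Fin q) (Fin p) ℂ) (U₄ : Matrix (Fin q) (Fin q) ℂ)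
    (Jp : Matrix (Fin p) (Fin p) ℂ) (hJp : ∀ i j, Jp i j = 1)
    (hU₁ : U₁ = a • Jp + b • 1)
    (hU₂ : ∀ i j, U₂ i j = a) (hU₃ : ∀ i j, U₃ i j = a)
    (hU₄ : ∀ i j, U₄ i j = a + if i = j then b else 0)
    (hden : (a * q + b) * (1 - k) - (1 + k) ≠ 0)
    (hinv : IsUnit ((1 - k) • U₄ - (1 + k) • (1 : Matrix (Fin q) (Fin q) ℂ))) :
    U₁ - (1 - k) • (U₂ * ((1 - k) • U₄ - (1 + k) • (1 : Matrix (Fin q) (Fin q) ℂ))⁻¹ * U₃)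
      = ((a * b * (1 - k) - a * (1 + k)) / ((a * q + b) * (1 - k) - (1 + k))) • Jp
        + b • (1 : Matrix (Fin p) (Fin p) ℂ) := by
  set M := (1 - k) • U₄ - (1 + k) • (1 : Matrix (Fin q) (Fin q) ℂ) with hM
  set d := (a * q + b) * (1 - k) - (1 + k) with hd
  have hMU3 : M * U₃ = d • U₃ := by
    ext i j
    simp only [hM, Matrix.mul_apply, Matrix.sub_apply, Matrix.smul_apply, Matrix.one_apply,
      hU₃, hU₄, smul_eq_mul, mul_ite, mul_one, mul_zero]
    rw [Finset.sum_congr rfl (fun l _ => by split_ifs <;> ring :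
      ∀ l ∈ Finset.univ, ((1 - k) * (a + if i = l then b else 0) -
        if i = l then 1 + k else 0) * a
        = (1 - k) * a * a + (if i = l then ((1 - k) * b - (1 + k)) * a else 0))]
    rw [Finset.sum_add_distrib, Finset.sum_ite_eq, Finset.sum_const]
    simp [hd]
    ring
  have hdet : IsUnit M.det := (Matrix.isUnit_iff_isUnit_det M).mp hinv
  have hinvU3 : M⁻¹ * U₃ = d⁻¹ • U₃ := by
    have h1 : M⁻¹ * (M * U₃) = U₃ := Matrix.nonsing_inv_mul_cancel_left M U₃ hdet
    rw [hMU3, Matrix.mul_smul] at h1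
    calc M⁻¹ * U₃ = d⁻¹ • (d • (M⁻¹ * U₃)) := by
          rw [smul_smul, inv_mul_cancel₀ hden, one_smul]
      _ = d⁻¹ • U₃ := by rw [h1]
  have hU23 : U₂ * U₃ = ((q : ℂ) * a * a) • Jp := by
    ext i j
    simp [Matrix.mul_apply, hU₂, hU₃, hJp, Finset.sum_const]
    ring
  rw [Matrix.mul_assoc, hinvU3, Matrix.mul_smul, hU23, hU₁]
  ext i j
  by_cases h : i = j <;>
  · simp [Matrix.add_apply, Matrix.sub_apply, Matrix.smul_apply, Matrix.one_apply, hJp, h]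
    field_simp
    ring
end

section
/- Let c > 0, c̃₁, c̃₂ > 0 and l > 0. The exponential equation (c − c̃₁ − c̃₂) e^{ikl/c} + (c + c̃₁ + c̃₂) e^{−ikl/c} = 0 has, for each R > 0, a number of solutions k with |k| < R equal to (2l/(πc))·R + O(1) as R → ∞ if c ≠ c̃₁ + c̃₂, and has no solutions at all if c = c̃₁ + c̃₂. -/
open Complex

/-!
If `c ≠ c̃₁ + c̃₂`, multiplying the equation by `e^{ikl/c}` turns it into `e^{2ikl/c} = w` with
`w = -(c + c̃₁ + c̃₂)/(c − c̃₁ − c̃₂) ≠ 0`, so its solutions form the arithmetic progression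
`a + Dℤ` with `D = πc/l` and `a = −ic log w/(2l)`. By the triangle inequality, the `n` with
`‖a + nD‖ < R` contain those with `|n| < (R − ‖a‖)/D` and are contained in those with
`|n| < (R + ‖a‖)/D`, and both counts are `2R/D + O(1)`.
-/

theorem mul_exp_add_mul_exp_neg_eq_zero_iff {A B : ℂ} (hA : A ≠ 0) (hB : B ≠ 0) (z : ℂ) :
    A * exp z + B * exp (-z) = 0 ↔ ∃ n : ℤ, 2 * z = log (-B / A) + n * (2 * Real.pi * I) := by
  have hw : -B / A ≠ 0 := div_ne_zero (neg_ne_zero.2 hB) hA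
  have : A * exp z + B * exp (-z) = 0 ↔ exp (2 * z) = -B / A := by
    rw [two_mul, exp_add, exp_neg, eq_div_iff hA]
    have hz := exp_ne_zero z
    field_simp
    constructor <;> intro h <;> linear_combination h
  rw [this, ← exp_log hw, exp_eq_exp_iff_exists_int, exp_log hw]

theorem mul_exp_I_mul_add_mul_exp_neg_eq_zero_iff {A B : ℂ} (hA : A ≠ 0) (hB : B ≠ 0) {ω : ℝ}
    (hω : ω ≠ 0) (k : ℂ) :
    A * exp (I * k * ω) + B * exp (-(I * k * ω)) = 0 ↔
      ∃ n : ℤ, k = -I * log (-B / A) / (2 * ω) + n • ((Real.pi / ω : ℝ) : ℂ) := by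
  rw [mul_exp_add_mul_exp_neg_eq_zero_iff hA hB]
  refine exists_congr fun n => ?_
  have hωC : (ω : ℂ) ≠ 0 := ofReal_ne_zero.2 hω
  rw [zsmul_eq_mul]
  push_cast
  generalize log (-B / A) = L
  constructor <;> intro h
  · field_simp
    linear_combination (-I) * h + (2 * k * ω - 2 * n * Real.pi) * I_mul_I
  · rw [h]
    field_simp
    linear_combination (-L) * I_mul_I

theorem Int.ncard_setOf_abs_lt (t : ℝ) :
    {n : ℤ | |(n : ℝ)| < t}.ncard = (2 * ⌈t⌉ - 1).toNat := by
  have : {n : ℤ | |(n : ℝ)| < t} = Set.Ioo (-⌈t⌉) ⌈t⌉ := by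
    ext n
    simp only [Set.mem_ofPred_eq, Set.mem_Ioo, abs_lt, neg_lt, Int.lt_ceil, Int.cast_neg]
  rw [this, ← Finset.coe_Ioo, Set.ncard_coe_finset, Int.card_Ioo]
  congr 1
  ring

theorem Int.two_mul_sub_one_le_ncard_setOf_abs_lt (t : ℝ) :
    2 * t - 1 ≤ ({n : ℤ | |(n : ℝ)| < t}.ncard : ℝ) := by
  rw [Int.ncard_setOf_abs_lt]
  have h : ((2 * ⌈t⌉ - 1 : ℤ) : ℝ) ≤ ((2 * ⌈t⌉ - 1).toNat : ℝ) := by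
    exact_mod_cast Int.self_le_toNat _
  push_cast at h
  linarith [Int.le_ceil t]

theorem Int.ncard_setOf_abs_lt_le {t : ℝ} (ht : 0 ≤ t) :
    ({n : ℤ | |(n : ℝ)| < t}.ncard : ℝ) ≤ 2 * t + 1 := by
  rw [Int.ncard_setOf_abs_lt]
  have h : (((2 * ⌈t⌉ - 1).toNat : ℤ) : ℝ) ≤ 2 * t + 1 := by
    rw [Int.toNat_eq_max]
    push_cast
    exact max_le (by linarith [Int.ceil_lt_add_one t]) (by linarith)
  exact_mod_cast h

theorem Int.finite_setOf_abs_lt (t : ℝ) : {n : ℤ | |(n : ℝ)| < t}.Finite := by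
  refine (Set.finite_Ioo (-⌈t⌉) ⌈t⌉).subset fun n hn => ?_
  simp only [Set.mem_ofPred_eq, abs_lt] at hn
  exact ⟨neg_lt.1 (Int.lt_ceil.2 (by exact_mod_cast neg_lt.1 hn.1)), Int.lt_ceil.2 hn.2⟩

theorem abs_ncard_setOf_norm_add_zsmul_lt_sub_le {E : Type*} [SeminormedAddCommGroup E]
    [NormedSpace ℝ E] (a : E) {v : E} (hv : 0 < ‖v‖) {R : ℝ}
    (hR : 0 ≤ R) :
    |({n : ℤ | ‖a + n • v‖ < R}.ncard : ℝ) - 2 * R / ‖v‖| ≤ 2 * ‖a‖ / ‖v‖ + 1 := by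
  have norm_zsmul_v (n : ℤ) : ‖n • v‖ = |(n : ℝ)| * ‖v‖ := by
    rw [norm_zsmul ℝ, Real.norm_eq_abs]
  have hsub : {n : ℤ | |(n : ℝ)| < (R - ‖a‖) / ‖v‖} ⊆ {n : ℤ | ‖a + n • v‖ < R} := by
    intro n hn
    rw [Set.mem_ofPred_eq, lt_div_iff₀ hv] at hn
    calc ‖a + n • v‖ ≤ ‖a‖ + ‖n • v‖ := norm_add_le _ _
      _ < R := by rw [norm_zsmul_v]; linarith
  have hsup : {n : ℤ | ‖a + n • v‖ < R} ⊆ {n : ℤ | |(n : ℝ)| < (R + ‖a‖) / ‖v‖} := by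
    intro n hn
    rw [Set.mem_ofPred_eq, lt_div_iff₀ hv, ← norm_zsmul_v]
    calc ‖n • v‖ = ‖(a + n • v) - a‖ := by rw [add_sub_cancel_left]
      _ ≤ ‖a + n • v‖ + ‖a‖ := norm_sub_le _ _
      _ < R + ‖a‖ := by linarith [hn.out]
  have hlower := (Int.two_mul_sub_one_le_ncard_setOf_abs_lt _).trans
    (Nat.cast_le.2 (Set.ncard_le_ncard hsub ((Int.finite_setOf_abs_lt _).subset hsup)))
  have hupper :=
    (Nat.cast_le (α := ℝ).2 (Set.ncard_le_ncard hsup (Int.finite_setOf_abs_lt _))).trans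
    (Int.ncard_setOf_abs_lt_le (by positivity))
  rw [abs_le]
  constructor
  · linarith [show 2 * ((R - ‖a‖) / ‖v‖) = 2 * R / ‖v‖ - 2 * ‖a‖ / ‖v‖ by ring]
  · linarith [show 2 * ((R + ‖a‖) / ‖v‖) = 2 * R / ‖v‖ + 2 * ‖a‖ / ‖v‖ by ring]

theorem ncard_setOf_exists_eq_add_zsmul_and {E : Type*} [AddCommGroup E]
    [Module.IsTorsionFree ℤ E] (a : E) {v : E} (hv : v ≠ 0) (p : E → Prop) :
    {x : E | (∃ n : ℤ, x = a + n • v) ∧ p x}.ncard = {n : ℤ | p (a + n • v)}.ncard := by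
  have hinj : Function.Injective fun n : ℤ => a + n • v :=
    (add_right_injective a).comp (smul_left_injective ℤ hv)
  rw [← Set.ncard_image_of_injective _ hinj]
  congr 1
  ext x
  constructor
  · rintro ⟨⟨n, rfl⟩, hx⟩
    exact ⟨n, hx, rfl⟩
  · rintro ⟨n, hn, rfl⟩
    exact ⟨⟨n, rfl⟩, hn⟩

/-- For the weighted graph with one internal edge and two leads, the equation
`(c − c̃₁ − c̃₂)e^{ikl/c} + (c + c̃₁ + c̃₂)e^{−ikl/c} = 0` has `(2l/(πc))R + O(1)`
solutions with `|k| < R` if `c ≠ c̃₁ + c̃₂`, and no solutions if `c = c̃₁ + c̃₂`. -/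
theorem stmt12 (c c₁ c₂ l : ℝ) (hc : 0 < c) (hc₁ : 0 < c₁) (hc₂ : 0 < c₂)
    (hl : 0 < l) :
    (c ≠ c₁ + c₂ →
      ∃ C : ℝ, ∀ R : ℝ, 1 ≤ R →
        |({k : ℂ | ((c : ℂ) - c₁ - c₂) * Complex.exp (Complex.I * k * l / c)
              + ((c : ℂ) + c₁ + c₂) * Complex.exp (-(Complex.I * k * l / c)) = 0
            ∧ ‖k‖ < R}.ncard : ℝ) - (2 * l / (Real.pi * c)) * R| ≤ C) ∧
    (c = c₁ + c₂ →
      ∀ k : ℂ, ((c : ℂ) - c₁ - c₂) * Complex.exp (Complex.I * k * l / c)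
          + ((c : ℂ) + c₁ + c₂) * Complex.exp (-(Complex.I * k * l / c)) ≠ 0) := by
  have hB : (c : ℂ) + c₁ + c₂ ≠ 0 := by exact_mod_cast (by linarith : (0 : ℝ) < c + c₁ + c₂).ne'
  refine ⟨fun hne => ?_, fun heq k => ?_⟩
  · have hA : (c : ℂ) - c₁ - c₂ ≠ 0 := by
      exact_mod_cast sub_sub (c : ℝ) c₁ c₂ ▸ sub_ne_zero.2 hne
    have hω : l / c ≠ 0 := (div_pos hl hc).ne'
    set a := -I * log (-((c : ℂ) + c₁ + c₂) / ((c : ℂ) - c₁ - c₂)) / (2 * (l / c : ℝ))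
    set v : ℂ := ((Real.pi / (l / c) : ℝ) : ℂ)
    have hv : ‖v‖ = Real.pi * c / l := by
      rw [norm_real, Real.norm_of_nonneg (by positivity)]
      field_simp
    have hv_pos : 0 < ‖v‖ := hv ▸ by positivity
    refine ⟨2 * ‖a‖ / ‖v‖ + 1, fun R hR => ?_⟩
    have hexponent (k : ℂ) : I * k * l / c = I * k * ((l / c : ℝ) : ℂ) := by push_cast; ring
    simp only [hexponent, mul_exp_I_mul_add_mul_exp_neg_eq_zero_iff hA hB hω]
    rw [ncard_setOf_exists_eq_add_zsmul_and a (norm_pos_iff.1 hv_pos),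
      show 2 * l / (Real.pi * c) * R = 2 * R / ‖v‖ by rw [hv]; field_simp]
    exact abs_ncard_setOf_norm_add_zsmul_lt_sub_le a hv_pos (by linarith)
  · have hA : (c : ℂ) - c₁ - c₂ = 0 := by rw [heq]; push_cast; ring
    rw [hA, zero_mul, zero_add]
    exact mul_ne_zero hB (exp_ne_zero _)
end

section
/- In the setting of the previous theorem, there exist a compact set Ω ⊂ ℂ, real numbers m_r and positive constants K_r (r = 1,…,n) such that every zero of F outside Ω lies in one of the n logarithmic strips {k : |−Im k + m_r log|k|| ≤ K_r}. -/
open Complex Filter Finset Topology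

/-!
With `L = log ‖k‖` and `t = Im k / L`, the `q`-th term of `F k` has modulus
`exp (L * (ν q - σ q * t)) * ‖a q k‖`, and for large `‖k‖` the factors `a q k` are all
comparable. For each cut of the indices into `q ≤ j` and `q > j`, the difference of the upper
envelopes of the two families of lines `t ↦ ν q - σ q * t` decreases at rate at least
`σ (j + 1) - σ j`, so it has a zero `c j`, and its modulus is at least
`(σ (j + 1) - σ j) * |t - c j|`. A cut separating the maximal line at `t` from any other line
bounds the gap between them by this modulus. So outside the strips `|-Im k + c j * L| ≤ K j` the
largest term of `F k` outweighs all the others together, and `F k ≠ 0`.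
-/

theorem exists_mul_abs_sub_le_abs_of_decreasing {f : ℝ → ℝ} (hf : Continuous f) {δ : ℝ}
    (hδ : 0 < δ) (hdec : ∀ t t', t' ≤ t → f t ≤ f t' - δ * (t - t')) :
    ∃ c, ∀ t, δ * |t - c| ≤ |f t| := by
  have hδf : δ * (f 0 / δ) = f 0 := mul_div_cancel₀ _ hδ.ne'
  obtain ⟨c, hc⟩ : ∃ c, f c = 0 := by
    have hneg : f (max 0 (f 0 / δ)) ≤ 0 := by
      have := hdec (max 0 (f 0 / δ)) 0 (le_max_left _ _)
      nlinarith [mul_le_mul_of_nonneg_left (le_max_right 0 (f 0 / δ)) hδ.le]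
    have hpos : 0 ≤ f (min 0 (f 0 / δ)) := by
      have := hdec 0 (min 0 (f 0 / δ)) (min_le_left _ _)
      nlinarith [mul_le_mul_of_nonneg_left (min_le_right 0 (f 0 / δ)) hδ.le]
    exact intermediate_value_univ _ _ hf ⟨hneg, hpos⟩
  refine ⟨c, fun t => ?_⟩
  rcases le_total c t with h | h
  · have := hdec t c h
    rw [abs_of_nonneg (sub_nonneg.2 h)]
    linarith [neg_le_abs (f t)]
  · have := hdec c t h
    rw [abs_of_nonpos (sub_nonpos.2 h)]
    linarith [le_abs_self (f t)]

section Envelope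

variable {ι : Type*} (σ ν : ι → ℝ)

theorem sup'_lines_le_sub (s : Finset ι) (hs : s.Nonempty) {a : ℝ} (ha : ∀ q ∈ s, a ≤ σ q)
    {t t' : ℝ} (htt : t' ≤ t) :
    s.sup' hs (fun q => ν q - σ q * t) ≤ s.sup' hs (fun q => ν q - σ q * t') - a * (t - t') :=
  Finset.sup'_le _ _ fun q hq => by
    have := Finset.le_sup' (fun q => ν q - σ q * t') hq
    nlinarith [ha q hq]

theorem sub_le_sup'_lines (s : Finset ι) (hs : s.Nonempty) {b : ℝ} (hb : ∀ q ∈ s, σ q ≤ b)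
    {t t' : ℝ} (htt : t' ≤ t) :
    s.sup' hs (fun q => ν q - σ q * t') - b * (t - t') ≤ s.sup' hs (fun q => ν q - σ q * t) := by
  obtain ⟨q, hq, hmax⟩ := Finset.exists_mem_eq_sup' hs (fun q => ν q - σ q * t')
  have := Finset.le_sup' (fun q => ν q - σ q * t) hq
  nlinarith [hb q hq]

end Envelope

section Cut

variable {N : ℕ} (σ ν : Fin (N + 1) → ℝ)

def cutGap (j : Fin N) (t : ℝ) : ℝ :=
  (Ioi j.castSucc).sup' ⟨j.succ, by simp⟩ (fun q => ν q - σ q * t) -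
    (Iic j.castSucc).sup' ⟨j.castSucc, by simp⟩ (fun q => ν q - σ q * t)

theorem continuous_cutGap (j : Fin N) : Continuous (cutGap σ ν j) := by
  unfold cutGap
  fun_prop

theorem cutGap_le (hσ : Monotone σ) (j : Fin N) {t t' : ℝ} (htt : t' ≤ t) :
    cutGap σ ν j t ≤ cutGap σ ν j t' - (σ j.succ - σ j.castSucc) * (t - t') := by
  have hup := sup'_lines_le_sub σ ν (Ioi j.castSucc) ⟨j.succ, by simp⟩
    (a := σ j.succ) (fun q hq => hσ (Fin.castSucc_lt_iff_succ_le.1 (mem_Ioi.1 hq))) htt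
  have hlow := sub_le_sup'_lines σ ν (Iic j.castSucc) ⟨j.castSucc, by simp⟩
    (b := σ j.castSucc) (fun q hq => hσ (mem_Iic.1 hq)) htt
  unfold cutGap
  linarith

theorem exists_mul_abs_sub_le_abs_cutGap (hσ : StrictMono σ) :
    ∃ c : Fin N → ℝ, ∀ j t, (σ j.succ - σ j.castSucc) * |t - c j| ≤ |cutGap σ ν j t| :=
  ⟨_, fun j => Classical.choose_spec <| exists_mul_abs_sub_le_abs_of_decreasing
    (continuous_cutGap σ ν j) (sub_pos.2 (hσ j.castSucc_lt_succ))
    fun _ _ htt => cutGap_le σ ν hσ.monotone j htt⟩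

theorem abs_cutGap_le (j : Fin N) {t : ℝ} {r s : Fin (N + 1)}
    (hr : ∀ q, ν q - σ q * t ≤ ν r - σ r * t)
    (hsep : r ≤ j.castSucc ∧ j.castSucc < s ∨ s ≤ j.castSucc ∧ j.castSucc < r) :
    |cutGap σ ν j t| ≤ (ν r - σ r * t) - (ν s - σ s * t) := by
  have hbetween : ∀ (S : Finset (Fin (N + 1))) (hS : S.Nonempty), r ∈ S ∨ s ∈ S →
      ν s - σ s * t ≤ S.sup' hS (fun q => ν q - σ q * t) ∧
        S.sup' hS (fun q => ν q - σ q * t) ≤ ν r - σ r * t := by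
    refine fun S hS hmem => ⟨?_, sup'_le _ _ fun q _ => hr q⟩
    rcases hmem with h | h
    · exact (hr s).trans (le_sup' (fun q => ν q - σ q * t) h)
    · exact le_sup' (fun q => ν q - σ q * t) h
  have hup := hbetween (Ioi j.castSucc) ⟨j.succ, by simp⟩ (by simp only [mem_Ioi]; tauto)
  have hlow := hbetween (Iic j.castSucc) ⟨j.castSucc, by simp⟩ (by simp only [mem_Iic]; tauto)
  unfold cutGap
  rw [abs_sub_le_iff]
  constructor <;> linarith

theorem exists_line_centers (hσ : StrictMono σ) :
    ∃ c : Fin N → ℝ, ∀ t r, (∀ q, ν q - σ q * t ≤ ν r - σ r * t) → ∀ s ≠ r, ∃ j : Fin N,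
      (σ j.succ - σ j.castSucc) * |t - c j| ≤ (ν r - σ r * t) - (ν s - σ s * t) := by
  obtain ⟨c, hc⟩ := exists_mul_abs_sub_le_abs_cutGap σ ν hσ
  refine ⟨c, fun t r hr s hs => ?_⟩
  have hlast : min r s ≠ Fin.last N :=
    (lt_of_lt_of_le (min_lt_max.2 hs.symm) (Fin.le_last _)).ne
  refine ⟨(min r s).castPred hlast, (hc _ t).trans (abs_cutGap_le σ ν _ hr ?_)⟩
  rw [Fin.castSucc_castPred]
  rcases lt_or_gt_of_ne hs with h | h
  · rw [min_eq_right h.le]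
    exact Or.inr ⟨le_rfl, h⟩
  · rw [min_eq_left h.le]
    exact Or.inl ⟨le_rfl, h⟩

/-- At `x = log ‖k‖` and `y = Im k`, `ν q * x - σ q * y` is the logarithm of the modulus of
`k ^ ν q * exp (I * k * σ q)`. -/
def IsStripCenters (c : Fin N → ℝ) : Prop :=
  ∀ x > 0, ∀ y r, (∀ q, ν q * x - σ q * y ≤ ν r * x - σ r * y) →
    ∀ s ≠ r, ∃ j : Fin N, (σ j.succ - σ j.castSucc) * |-y + c j * x| ≤
      (ν r * x - σ r * y) - (ν s * x - σ s * y)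

theorem exists_isStripCenters (hσ : StrictMono σ) : ∃ c, IsStripCenters σ ν c := by
  obtain ⟨c, hc⟩ := exists_line_centers σ ν hσ
  refine ⟨c, fun x hx y r hr s hs => ?_⟩
  have hscale : ∀ q, ν q * x - σ q * y = x * (ν q - σ q * (y / x)) := fun q => by
    field_simp
  obtain ⟨j, hj⟩ := hc (y / x) r (fun q => le_of_mul_le_mul_left (by
    simpa only [hscale] using hr q) hx) s hs
  have habs : |-y + c j * x| = x * |y / x - c j| := by
    rw [← abs_of_pos hx, ← abs_mul, abs_of_pos hx, ← abs_neg]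
    congr 1
    field_simp
    ring
  refine ⟨j, ?_⟩
  rw [habs, hscale, hscale]
  nlinarith [mul_le_mul_of_nonneg_left hj hx.le]

end Cut

theorem sum_ne_zero_of_card_mul_norm_le {ι E : Type*} [Fintype ι] [NormedAddCommGroup E]
    (w : ι → E) {r : ι} (hr : w r ≠ 0) (hdom : ∀ s ≠ r, Fintype.card ι * ‖w s‖ ≤ ‖w r‖) :
    ∑ s, w s ≠ 0 := by
  classical
  intro hsum
  have hrest : w r = -∑ s ∈ univ.erase r, w s := by
    rw [← add_sum_erase univ w (mem_univ r)] at hsum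
    exact eq_neg_of_add_eq_zero_left hsum
  have hcard : ((univ.erase r).card : ℝ) < Fintype.card ι := by
    exact_mod_cast card_erase_lt_of_mem (mem_univ r)
  have hpos : 0 < ‖w r‖ := norm_pos_iff.2 hr
  have : Fintype.card ι * ‖w r‖ ≤ (univ.erase r).card * ‖w r‖ :=
    calc Fintype.card ι * ‖w r‖ ≤ ∑ s ∈ univ.erase r, Fintype.card ι * ‖w s‖ := by
          rw [← mul_sum, hrest, norm_neg]
          exact mul_le_mul_of_nonneg_left (norm_sum_le _ _) (Nat.cast_nonneg _)
      _ ≤ ∑ _s ∈ univ.erase r, ‖w r‖ := sum_le_sum fun s hs => hdom s (ne_of_mem_erase hs)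
      _ = (univ.erase r).card * ‖w r‖ := by rw [sum_const, nsmul_eq_mul]
  nlinarith

theorem norm_cpow_mul_mul_exp {k : ℂ} (hk : k ≠ 0) (ν σ : ℝ) (b : ℂ) :
    ‖k ^ (ν : ℂ) * b * exp (I * k * σ)‖ = Real.exp (ν * Real.log ‖k‖ - σ * k.im) * ‖b‖ := by
  rw [norm_mul, norm_mul, norm_exp, norm_cpow_real, Real.rpow_def_of_pos (norm_pos_iff.2 hk),
    Real.exp_sub]
  simp [Complex.mul_re, Complex.mul_im, Real.exp_neg, div_eq_mul_inv, mul_comm, mul_left_comm]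

theorem exists_eventually_norm_le_mul_norm {ι X 𝕜 : Type*} [Finite ι] [NormedField 𝕜]
    {l : Filter X} {a : ι → X → 𝕜} {α : ι → 𝕜} (hα : ∀ r, α r ≠ 0)
    (ha : ∀ r, Tendsto (a r) l (𝓝 (α r))) :
    ∃ C, 1 ≤ C ∧ ∀ᶠ x in l, ∀ r, a r x ≠ 0 ∧ ∀ s, ‖a s x‖ ≤ C * ‖a r x‖ := by
  obtain ⟨C, hC⟩ := Finite.exists_le fun p : ι × ι => ‖α p.1 / α p.2‖ + 1
  refine ⟨max C 1, le_max_right _ _, eventually_all.2 fun r => ?_⟩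
  have hratio : ∀ s, ∀ᶠ x in l, ‖a s x / a r x‖ < ‖α s / α r‖ + 1 := fun s =>
    (((ha s).div (ha r) (hα r)).norm).eventually (gt_mem_nhds (lt_add_one _))
  filter_upwards [(ha r).eventually_ne (hα r), eventually_all.2 hratio] with x hx hs
  refine ⟨hx, fun s => ?_⟩
  calc ‖a s x‖ = ‖a s x / a r x‖ * ‖a r x‖ := by
        rw [norm_div, div_mul_cancel₀ _ (norm_ne_zero_iff.2 hx)]
    _ ≤ max C 1 * ‖a r x‖ :=
        mul_le_mul_of_nonneg_right (((hs s).le.trans (hC (s, r))).trans (le_max_left _ _))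
          (norm_nonneg _)

theorem sum_ne_zero_off_strips {n : ℕ} {σ ν : Fin (n + 1) → ℝ} {c : Fin n → ℝ}
    (hc : IsStripCenters σ ν c)
    {b : Fin (n + 1) → ℂ} {C : ℝ} (hb : ∀ r, b r ≠ 0 ∧ ∀ s, ‖b s‖ ≤ C * ‖b r‖)
    {k : ℂ} (hk : 1 < ‖k‖)
    (hfar : ∀ j : Fin n,
      Real.log ((n + 1) * C) < (σ j.succ - σ j.castSucc) * |-k.im + c j * Real.log ‖k‖|) :
    ∑ r, k ^ (ν r : ℂ) * b r * exp (I * k * σ r) ≠ 0 := by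
  have hk0 : k ≠ 0 := norm_pos_iff.1 (one_pos.trans hk)
  set E : Fin (n + 1) → ℝ := fun q => ν q * Real.log ‖k‖ - σ q * k.im
  obtain ⟨r, hr⟩ := Finite.exists_max E
  refine sum_ne_zero_of_card_mul_norm_le _ (r := r) ?_ fun s hs => ?_
  · rw [← norm_ne_zero_iff, norm_cpow_mul_mul_exp hk0]
    exact mul_ne_zero (Real.exp_pos _).ne' (norm_ne_zero_iff.2 (hb r).1)
  obtain ⟨j, hj⟩ := hc _ (Real.log_pos hk) k.im r hr s hs
  have hgap : Real.log ((n + 1) * C) ≤ E r - E s := (hfar j).le.trans hj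
  rw [norm_cpow_mul_mul_exp hk0, norm_cpow_mul_mul_exp hk0, Fintype.card_fin]
  calc ((n + 1 : ℕ) : ℝ) * (Real.exp (E s) * ‖b s‖)
      ≤ (n + 1 : ℕ) * (Real.exp (E s) * (C * ‖b r‖)) := by grw [(hb r).2 s]
    _ = (n + 1) * C * Real.exp (E s) * ‖b r‖ := by push_cast; ring
    _ ≤ Real.exp (E r - E s) * Real.exp (E s) * ‖b r‖ := by
        gcongr
        exact (Real.le_exp_log _).trans (Real.exp_le_exp.2 hgap)
    _ = Real.exp (E r) * ‖b r‖ := by rw [← Real.exp_add, sub_add_cancel]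

theorem stmt15_general (n : ℕ) (σ : Fin (n + 1) → ℝ) (hσ : StrictMono σ)
    (ν : Fin (n + 1) → ℝ) (α : Fin (n + 1) → ℂ) (hα : ∀ r, α r ≠ 0)
    (a : Fin (n + 1) → ℂ → ℂ)
    (ha : ∀ r, Tendsto (a r) (Filter.comap (fun z : ℂ => ‖z‖) atTop) (nhds (α r)))
    (F : ℂ → ℂ)
    (hF : ∀ k : ℂ, F k = ∑ r, (k : ℂ) ^ ((ν r : ℂ)) * a r k *
      Complex.exp (Complex.I * k * σ r)) :
    ∃ Ω : Set ℂ, IsCompact Ω ∧ ∃ m : Fin n → ℝ, ∃ K : Fin n → ℝ,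
      (∀ r, 0 < K r) ∧
      ∀ k : ℂ, F k = 0 → k ∉ Ω → ∃ r : Fin n,
        |(-k.im + m r * Real.log ‖k‖)| ≤ K r := by
  obtain ⟨m, hm⟩ := exists_isStripCenters σ ν hσ
  obtain ⟨C, hC, hcomparable⟩ := exists_eventually_norm_le_mul_norm hα ha
  set κ := Real.log ((n + 1) * C)
  have hκ : 0 ≤ κ := Real.log_nonneg (by nlinarith)
  have hgap : ∀ j : Fin n, 0 < σ j.succ - σ j.castSucc := fun j =>
    sub_pos.2 (hσ j.castSucc_lt_succ)
  set K : Fin n → ℝ := fun j => (κ + 1) / (σ j.succ - σ j.castSucc)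
  have hzeros : ∀ᶠ k in cocompact ℂ, F k = 0 → ∃ j, |-k.im + m j * Real.log ‖k‖| ≤ K j := by
    rw [← Metric.cobounded_eq_cocompact, ← comap_norm_atTop]
    filter_upwards [hcomparable, tendsto_comap.eventually (eventually_gt_atTop 1)]
      with k hb hk hFk
    by_contra! hfar
    refine sum_ne_zero_off_strips hm hb hk (fun j => ?_) (hF k ▸ hFk)
    have := hfar j
    rw [div_lt_iff₀' (hgap j)] at this
    linarith
  obtain ⟨Ω, hΩ, hΩzeros⟩ := mem_cocompact.1 hzeros
  exact ⟨Ω, hΩ, m, K, fun j => div_pos (by linarith) (hgap j), fun k hk hkΩ => hΩzeros hkΩ hk⟩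

/-- All zeros of `F(k) = Σ_r k^{ν_r} a_r(k) e^{ikσ_r}` (with `a_r` rational,
`a_r(k) → α_r ≠ 0`) outside some compact set lie in one of `n` logarithmic strips
`{k : |−Im k + m_r log|k|| ≤ K_r}`. -/
theorem stmt15 (n : ℕ) (hn : 1 ≤ n) (σ : Fin (n + 1) → ℝ) (hσ : StrictMono σ)
    (ν : Fin (n + 1) → ℝ) (α : Fin (n + 1) → ℂ) (hα : ∀ r, α r ≠ 0)
    (a : Fin (n + 1) → ℂ → ℂ)
    (hrat : ∀ r, ∃ p q : Polynomial ℂ, q ≠ 0 ∧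
      ∀ k : ℂ, q.eval k ≠ 0 → a r k = p.eval k / q.eval k)
    (ha : ∀ r, Tendsto (a r) (Filter.comap (fun z : ℂ => ‖z‖) atTop) (nhds (α r)))
    (F : ℂ → ℂ)
    (hF : ∀ k : ℂ, F k = ∑ r, (k : ℂ) ^ ((ν r : ℂ)) * a r k *
      Complex.exp (Complex.I * k * σ r)) :
    ∃ Ω : Set ℂ, IsCompact Ω ∧ ∃ m : Fin n → ℝ, ∃ K : Fin n → ℝ,
      (∀ r, 0 < K r) ∧
      ∀ k : ℂ, F k = 0 → k ∉ Ω → ∃ r : Fin n,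
        |(-k.im + m r * Real.log ‖k‖)| ≤ K r :=
  stmt15_general n σ hσ ν α hα a ha F hF
end

section
/- Let α ∈ ℝ, β = 1, l > 0. The equation −α sin(kl) + 2k(1 + i sin(kl) − cos(kl)) = 0 has the solutions k = 2nπ/l, n ∈ ℤ, and all other solutions satisfy e^{ikl} = −1 + 4ik/α (for α ≠ 0); i.e. the solution set is exactly {2nπ/l : n ∈ ℤ} ∪ {k : e^{ikl} = −1 + 4ik/α}. -/
open Complex

/-- For `β = 1` the resonance equation
`−α sin(kl) + 2k(1 + i sin(kl) − cos(kl)) = 0` has solution set exactly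
`{2nπ/l : n ∈ ℤ} ∪ {k : e^{ikl} = −1 + 4ik/α}` (for `α ≠ 0`). -/
theorem stmt18 (α l : ℝ) (hα : α ≠ 0) (hl : 0 < l) :
    {k : ℂ | -(α : ℂ) * Complex.sin (k * l)
        + 2 * k * (1 + Complex.I * Complex.sin (k * l) - Complex.cos (k * l)) = 0}
      = {k : ℂ | ∃ n : ℤ, k = 2 * n * Real.pi / l}
        ∪ {k : ℂ | Complex.exp (Complex.I * k * l)
            = -1 + 4 * Complex.I * k / α} := by
  have hl0 : (l : ℂ) ≠ 0 := by exact_mod_cast hl.ne'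
  have hα0 : (α : ℂ) ≠ 0 := by exact_mod_cast hα
  ext k
  simp only [Set.mem_setOf_eq, Set.mem_union]
  set z := Complex.exp (Complex.I * k * l) with hz
  have hz0 : z ≠ 0 := Complex.exp_ne_zero _
  have h1 : Complex.exp (k * l * Complex.I) = z := by rw [hz]; congr 1; ring
  have h2 : Complex.exp (-(k * l) * Complex.I) = z⁻¹ := by
    rw [hz, ← Complex.exp_neg]; congr 1; ring
  have hsin : Complex.sin (k * l) = (z⁻¹ - z) * Complex.I / 2 := by
    rw [Complex.sin, h1, h2]
  have hcos : Complex.cos (k * l) = (z + z⁻¹) / 2 := by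
    rw [Complex.cos, h1, h2]
  have key : 2 * z * (-(α : ℂ) * Complex.sin (k * l)
      + 2 * k * (1 + Complex.I * Complex.sin (k * l) - Complex.cos (k * l)))
      = (z - 1) * (Complex.I * α * (1 + z) + 4 * k) := by
    rw [hsin, hcos]
    field_simp
    ring_nf
    simp [Complex.I_sq]
    ring
  constructor
  · intro h
    have h2z : (z - 1) * (Complex.I * α * (1 + z) + 4 * k) = 0 := by
      rw [← key, h, mul_zero]
    rcases mul_eq_zero.1 h2z with h3 | h3
    · left
      have hz1 : z = 1 := by linear_combination h3
      rw [hz, Complex.exp_eq_one_iff] at hz1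
      obtain ⟨n, hn⟩ := hz1
      refine ⟨n, ?_⟩
      have hkl : k * (l : ℂ) = 2 * (n : ℂ) * (Real.pi : ℂ) := by
        linear_combination (-Complex.I) * hn
          + (k * (l : ℂ) - 2 * (n : ℂ) * (Real.pi : ℂ)) * Complex.I_mul_I
      rw [eq_div_iff hl0]
      exact hkl
    · right
      have h4 : (α : ℂ) * z = -α + 4 * Complex.I * k := by
        linear_combination (-Complex.I) * h3 + (α : ℂ) * (1 + z) * Complex.I_mul_I
      field_simp
      linear_combination h4
  · intro h
    have hfac : (z - 1) * (Complex.I * α * (1 + z) + 4 * k) = 0 := by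
      rcases h with ⟨n, hn⟩ | h
      · have hz1 : z = 1 := by
          rw [hz, Complex.exp_eq_one_iff]
          refine ⟨n, ?_⟩
          rw [hn]; push_cast; field_simp
        rw [hz1]; ring
      · field_simp at h
        linear_combination ((z - 1) * Complex.I) * h
          + 4 * k * (z - 1) * Complex.I_mul_I
    have := key.trans hfac
    rcases mul_eq_zero.1 this with h4 | h4
    · exact absurd h4 (by simp [hz0])
    · exact h4
end

section
/- Let p, q ≥ 1 and let Ũ(k) = (a(b(1−k) − (1+k))/((aq+b)(1−k)−(1+k)))J_{p×p} + bI_{p×p} with |b| = 1. Then Ũ(k) has the eigenvalue (1−k)/(1+k) for all k in a nonempty open set (where defined) if and only if p = q and ap + b = 0 and (ap)² = 1; and Ũ(k) never has the eigenvalue (1+k)/(1−k) identically in k. -/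
/-!
Since `Ũ(k) - λ I = c J + (b - λ) I`, its determinant is `(b - λ)^(p-1) (p c + b - λ)`.
Clearing the denominators of `λ` and `c` turns its vanishing into the vanishing of a product
`f k * g k` of polynomials in `k`. On a nonempty open set this forces `g` to vanish identically
(identity theorem), because `f` does not vanish at `k = -1` (for `λ = (1-k)/(1+k)`), resp. at
`k = 1` (for `λ = (1+k)/(1-k)`). In the first case evaluating `g` at `k = 1, -1, 0` yields
`ap + b = 0`, `aq + b = 0` and `b² = 1`; in the second `g 1 = 4`.
-/

open Matrix Complex

theorem Differentiable.eq_zero_of_eqOn_zero {f : ℂ → ℂ} (hf : Differentiable ℂ f)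
    {S : Set ℂ} (hS : IsOpen S) {z : ℂ} (hz : z ∈ S) (hfS : Set.EqOn f 0 S) : f = 0 := by
  have := (hf.differentiableOn.analyticOnNhd isOpen_univ)
    |>.eqOn_zero_of_preconnected_of_eventuallyEq_zero isPreconnected_univ (Set.mem_univ z)
      (Filter.eventuallyEq_of_mem (hS.mem_nhds hz) hfS)
  exact funext fun k => this (Set.mem_univ k)

theorem Differentiable.eq_zero_of_mul_eqOn_zero {f g : ℂ → ℂ} (hf : Differentiable ℂ f)
    (hg : Differentiable ℂ g) {S : Set ℂ} (hS : IsOpen S) (hSne : S.Nonempty)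
    (hfg : Set.EqOn (f * g) 0 S) {z : ℂ} (hz : f z ≠ 0) (w : ℂ) : g w = 0 := by
  obtain ⟨x, hx⟩ := hSne
  have hprod : f * g = 0 := (hf.mul hg).eq_zero_of_eqOn_zero hS hx hfg
  refine congrFun (hg.eq_zero_of_eqOn_zero (isOpen_ne_fun hf.continuous continuous_const) hz
    fun k hk => ?_) w
  exact (mul_eq_zero.1 (congrFun hprod k)).resolve_left hk

section AllOnes

variable {K ι : Type*} [Field K] [Fintype ι] [DecidableEq ι] [Nonempty ι]

theorem det_smul_ones_add_smul_one (c d : K) :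
    (c • of (fun _ _ : ι => (1 : K)) + d • 1).det
      = d ^ (Fintype.card ι - 1) * (Fintype.card ι * c + d) := by
  obtain ⟨n, hn⟩ : ∃ n, Fintype.card ι = n + 1 :=
    Nat.exists_eq_add_one.2 Fintype.card_pos
  rw [hn, Nat.add_sub_cancel]
  rcases eq_or_ne d 0 with rfl | hd
  · rcases n with _ | n
    · obtain ⟨i, hi⟩ := Fintype.card_eq_one_iff.1 hn
      let _ : Unique ι := ⟨⟨i⟩, hi⟩
      simp
    · obtain ⟨i, j, hij⟩ := Fintype.exists_pair_of_one_lt_card (α := ι) (by omega)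
      rw [det_zero_of_row_eq hij (by ext; simp)]
      simp
  · have hrank : c • of (fun _ _ : ι => (1 : K)) + d • 1
        = d • (1 + replicateCol Unit (fun _ : ι => c / d)
          * replicateRow Unit (fun _ : ι => (1 : K))) := by
      ext i j
      rcases eq_or_ne i j with rfl | hij <;>
        simp [mul_apply, one_apply, *, mul_add, mul_div_cancel₀, add_comm]
    rw [hrank, det_smul, det_one_add_replicateCol_mul_replicateRow, hn]
    simp only [dotProduct, Finset.sum_const, Finset.card_univ, hn, nsmul_eq_mul]
    field_simp
    push_cast
    ring

theorem det_div_smul_ones_add_smul_one_sub_mul {A D u v : K} (b : K) (hD : D ≠ 0)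
    (hv : v ≠ 0) :
    ((A / D) • of (fun _ _ : ι => (1 : K)) + b • 1 - (u / v) • 1).det
        * (v ^ Fintype.card ι * D)
      = (b * v - u) ^ (Fintype.card ι - 1) * (Fintype.card ι * A * v + (b * v - u) * D) := by
  obtain ⟨n, hn⟩ : ∃ n, Fintype.card ι = n + 1 := Nat.exists_eq_add_one.2 Fintype.card_pos
  have hbuv : b - u / v = (b * v - u) / v := by field_simp
  rw [add_sub_assoc, ← sub_smul, det_smul_ones_add_smul_one, hn, Nat.add_sub_cancel, hbuv,
    div_pow]
  field_simp
  ring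

theorem det_div_smul_ones_add_smul_one_sub_eq_zero_iff {A D u v : K} (b : K) (hD : D ≠ 0)
    (hv : v ≠ 0) :
    ((A / D) • of (fun _ _ : ι => (1 : K)) + b • 1 - (u / v) • 1).det = 0 ↔
      (b * v - u) ^ (Fintype.card ι - 1) * (Fintype.card ι * A * v + (b * v - u) * D) = 0 := by
  rw [← det_div_smul_ones_add_smul_one_sub_mul b hD hv, mul_eq_zero,
    or_iff_left (mul_ne_zero (pow_ne_zero _ hv) hD)]

end AllOnes

theorem forall_eigen_numerator_eq_zero_iff {p q : ℕ} {a b : ℂ} :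
    (∀ k : ℂ, p * (a * (b * (1 - k) - (1 + k))) * (1 + k)
      + (b * (1 + k) - (1 - k)) * ((a * q + b) * (1 - k) - (1 + k)) = 0)
      ↔ (p : ℂ) = q ∧ a * p + b = 0 ∧ (a * p) ^ 2 = 1 := by
  refine ⟨fun h => ?_, fun ⟨hpq, hp, hp2⟩ k => ?_⟩
  · have hp : a * p + b = 0 := by linear_combination -(h 1) / 4
    have hq : a * q + b = 0 := by linear_combination -(h (-1)) / 4
    have hb : b ^ 2 = 1 := by linear_combination -(h 0) + (b - 1) * (hp + hq)
    have ha : a ≠ 0 := by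
      rintro rfl
      simp_all
    refine ⟨mul_left_cancel₀ ha (by linear_combination hp - hq), hp, ?_⟩
    linear_combination (a * p - b) * hp + hb
  · linear_combination (b * (1 + k) - (1 - k)) * (1 - k) * (hp - a * hpq)
      + (1 + k) * ((1 - k) * a * p - (1 + k)) * hp - (1 + k) * (1 - k) * hp2

theorem stmt19_general (p q : ℕ) (hp : 1 ≤ p) (a b : ℂ)
    (Jp : Matrix (Fin p) (Fin p) ℂ) (hJp : ∀ i j, Jp i j = 1)
    (Ueff : ℂ → Matrix (Fin p) (Fin p) ℂ)
    (hUeff : ∀ k : ℂ, Ueff k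
      = (a * (b * (1 - k) - (1 + k)) / ((a * q + b) * (1 - k) - (1 + k))) • Jp
        + b • (1 : Matrix (Fin p) (Fin p) ℂ)) :
    ((∃ S : Set ℂ, IsOpen S ∧ S.Nonempty ∧ ∀ k ∈ S,
        (a * q + b) * (1 - k) - (1 + k) ≠ 0 ∧ (1 : ℂ) + k ≠ 0 ∧
        (Ueff k - ((1 - k) / (1 + k)) • (1 : Matrix (Fin p) (Fin p) ℂ)).det = 0)
      ↔ ((p : ℂ) = q ∧ a * p + b = 0 ∧ (a * p) ^ 2 = 1)) ∧
    ¬ (∃ S : Set ℂ, IsOpen S ∧ S.Nonempty ∧ ∀ k ∈ S,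
        (a * q + b) * (1 - k) - (1 + k) ≠ 0 ∧ (1 : ℂ) - k ≠ 0 ∧
        (Ueff k - ((1 + k) / (1 - k)) • (1 : Matrix (Fin p) (Fin p) ℂ)).det = 0) := by
  obtain rfl : Jp = of fun _ _ => 1 := ext hJp
  have : Nonempty (Fin p) := ⟨⟨0, hp⟩⟩
  have hdet (k u v : ℂ) (hD : (a * q + b) * (1 - k) - (1 + k) ≠ 0) (hv : v ≠ 0) :=
    hUeff k ▸ Fintype.card_fin p ▸
      det_div_smul_ones_add_smul_one_sub_eq_zero_iff (ι := Fin p)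
        (A := a * (b * (1 - k) - (1 + k))) (u := u) b hD hv
  refine ⟨⟨fun ⟨S, hS, hSne, hk⟩ => ?_, fun h => ?_⟩, ?_⟩
  · apply forall_eigen_numerator_eq_zero_iff.1
    refine Differentiable.eq_zero_of_mul_eqOn_zero
      (f := fun k => (b * (1 + k) - (1 - k)) ^ (p - 1)) (z := -1) (by fun_prop) (by fun_prop)
      hS hSne (fun k hk' => ?_) (by norm_num)
    obtain ⟨hD, hv, h0⟩ := hk k hk'
    exact (hdet k (1 - k) _ hD hv).1 h0
  · obtain ⟨hpq, hap, -⟩ := id h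
    refine ⟨{-1}ᶜ, isOpen_compl_singleton, ⟨0, by norm_num⟩, fun k hk => ?_⟩
    have hv : (1 : ℂ) + k ≠ 0 := fun h1 =>
      hk (by rw [Set.mem_singleton_iff]; linear_combination h1)
    have hD : (a * q + b) * (1 - k) - (1 + k) ≠ 0 := by
      rw [show (a * q + b) * (1 - k) - (1 + k) = -(1 + k) by
        linear_combination (1 - k) * hap - a * (1 - k) * hpq]
      exact neg_ne_zero.2 hv
    refine ⟨hD, hv, (hdet k (1 - k) _ hD hv).2 ?_⟩
    rw [forall_eigen_numerator_eq_zero_iff.2 h k, mul_zero]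
  · rintro ⟨S, hS, hSne, hk⟩
    have := Differentiable.eq_zero_of_mul_eqOn_zero
      (f := fun k => (b * (1 - k) - (1 + k)) ^ (p - 1))
      (g := fun k => p * (a * (b * (1 - k) - (1 + k))) * (1 - k)
        + (b * (1 - k) - (1 + k)) * ((a * q + b) * (1 - k) - (1 + k)))
      (z := 1) (by fun_prop) (by fun_prop) hS hSne (fun k hk' => ?_) (by norm_num) 1
    · norm_num at this
    obtain ⟨hD, hv, h0⟩ := hk k hk'
    exact (hdet k (1 + k) _ hD hv).1 h0

/-- The effective coupling matrix
`Ũ(k) = (a(b(1−k)−(1+k))/((aq+b)(1−k)−(1+k)))·J + b·I` (with `|b| = 1`) has the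
eigenvalue `(1−k)/(1+k)` identically in `k` iff `p = q`, `ap + b = 0` and
`(ap)² = 1`; and it never has the eigenvalue `(1+k)/(1−k)` identically in `k`. -/
theorem stmt19 (p q : ℕ) (hp : 1 ≤ p) (hq : 1 ≤ q) (a b : ℂ)
    (hb : ‖b‖ = 1)
    (Jp : Matrix (Fin p) (Fin p) ℂ) (hJp : ∀ i j, Jp i j = 1)
    (Ueff : ℂ → Matrix (Fin p) (Fin p) ℂ)
    (hUeff : ∀ k : ℂ, Ueff k
      = (a * (b * (1 - k) - (1 + k)) / ((a * q + b) * (1 - k) - (1 + k))) • Jp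
        + b • (1 : Matrix (Fin p) (Fin p) ℂ)) :
    ((∃ S : Set ℂ, IsOpen S ∧ S.Nonempty ∧ ∀ k ∈ S,
        (a * q + b) * (1 - k) - (1 + k) ≠ 0 ∧ (1 : ℂ) + k ≠ 0 ∧
        (Ueff k - ((1 - k) / (1 + k)) • (1 : Matrix (Fin p) (Fin p) ℂ)).det = 0)
      ↔ ((p : ℂ) = q ∧ a * p + b = 0 ∧ (a * p) ^ 2 = 1)) ∧
    ¬ (∃ S : Set ℂ, IsOpen S ∧ S.Nonempty ∧ ∀ k ∈ S,
        (a * q + b) * (1 - k) - (1 + k) ≠ 0 ∧ (1 : ℂ) - k ≠ 0 ∧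
        (Ueff k - ((1 + k) / (1 - k)) • (1 : Matrix (Fin p) (Fin p) ℂ)).det = 0) :=
  stmt19_general p q hp a b Jp hJp Ueff hUeff
end
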